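/- If 𝒳 ⊂ ℝ^d is the closure of a bounded open set whose boundary ∂𝒳 is a (d−1)-dimensional C¹ submanifold of ℝ^d, and Q is a probability measure supported in 𝒳 with a Lebesgue density bounded above by q̄ < ∞, then sup_{L>0} L^{1/d} ∫_𝒳 exp(−L·δ(x)^d) dQ(x) < ∞, where δ(x) is the Euclidean distance from x to 𝒳ᶜ; that is, Condition (A) holds. -/

import Mathlib

open MeasureTheory ProbabilityTheory Filter Set
open scoped ENNReal NNReal Classical

noncomputable section

abbrev Euc (d : ℕ) : Type := EuclideanSpace ℝ (Fin d)

/-- Condition (X2) with constant `c`. -/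
def CondX2 {d : ℕ} (𝒳 : Set (Euc d)) (c : ℝ) : Prop :=
  ∀ x ∈ 𝒳, ∀ r : ℝ, 0 ≤ r → r ≤ Metric.diam 𝒳 →
    ENNReal.ofReal c * volume (Metric.closedBall x r) ≤ volume (Metric.closedBall x r ∩ 𝒳)

/-- Condition (A). -/
def CondA {d : ℕ} (𝒳 : Set (Euc d)) (Q : Measure (Euc d)) : Prop :=
  ∃ M : ℝ, ∀ L : ℝ, 0 < L →
    L ^ ((1 : ℝ) / d) * ∫ x, Real.exp (-L * Metric.infDist x 𝒳ᶜ ^ d) ∂Q ≤ M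

/-- `S ⊆ ℝ^{m+1}` is an `m`-dimensional `C¹` submanifold of `ℝ^{m+1}`: around each of its points,
after an isometric linear change of coordinates, `S` is the graph of a `C¹` function of the
first `m` coordinates (description of submanifolds through graphs). -/
def IsC1Hypersurface {m : ℕ} (S : Set (Euc (m + 1))) : Prop :=
  ∀ z ∈ S, ∃ (V : Set (Euc (m + 1))) (L : Euc (m + 1) ≃ₗᵢ[ℝ] Euc (m + 1))
      (A : Set (Euc m)) (φ : Euc m → ℝ),
    IsOpen V ∧ z ∈ V ∧ IsOpen A ∧ ContDiffOn ℝ 1 φ A ∧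
    V ∩ S = V ∩ (Set.image (fun a : Euc m =>
      L.symm (WithLp.toLp 2 (Fin.snoc a (φ a) : Fin (m + 1) → ℝ) : Euc (m + 1))) A)

open scoped Topology

namespace St13

def toE {m : ℕ} (b : Fin m → ℝ) : Euc m := WithLp.toLp 2 b

lemma continuous_toE {m : ℕ} : Continuous (toE (m := m)) :=
  PiLp.continuous_toLp 2 (fun _ : Fin m => ℝ)

lemma abs_coord_le_dist {m : ℕ} (x y : Euc m) (i : Fin m) : |x i - y i| ≤ dist x y := by
  rw [EuclideanSpace.dist_eq, ← Real.sqrt_sq_eq_abs]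
  apply Real.sqrt_le_sqrt
  have : (x i - y i) ^ 2 = dist (x i) (y i) ^ 2 := by rw [Real.dist_eq, sq_abs]
  rw [this]
  exact Finset.single_le_sum (f := fun i => dist (x i) (y i) ^ 2)
    (fun i _ => sq_nonneg _) (Finset.mem_univ _)

lemma dist_init_le {m : ℕ} (u v : Euc (m + 1)) :
    dist (toE (Fin.init u)) (toE (Fin.init v)) ≤ dist u v := by
  rw [EuclideanSpace.dist_eq, EuclideanSpace.dist_eq]
  apply Real.sqrt_le_sqrt
  rw [Fin.sum_univ_castSucc (f := fun i => dist (u i) (v i) ^ 2)]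
  have : ∀ i : Fin m, dist (toE (Fin.init u) i) (toE (Fin.init v) i)
      = dist (u i.castSucc) (v i.castSucc) := fun i => rfl
  simp_rw [this]
  have h0 : (0:ℝ) ≤ dist (u (Fin.last m)) (v (Fin.last m)) ^ 2 := sq_nonneg _
  linarith

lemma dist_last_le {m : ℕ} (u v : Euc (m + 1)) :
    |u (Fin.last m) - v (Fin.last m)| ≤ dist u v :=
  abs_coord_le_dist u v (Fin.last m)

lemma local_tube {m : ℕ} {S : Set (Euc (m + 1))} (hS : IsC1Hypersurface S)
    {z : Euc (m + 1)} (hz : z ∈ S) :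
    ∃ ρ : ℝ, 0 < ρ ∧ ∃ C : ℝ≥0∞, C ≠ ∞ ∧ ∀ t : ℝ, 0 < t → t ≤ ρ →
      volume (Metric.thickening t (S ∩ Metric.ball z ρ)) ≤ C * ENNReal.ofReal t := by
  obtain ⟨V, L, A, φ, hV, hzV, hA, hφ, hgraph⟩ := hS z hz
  have hzVS : z ∈ V ∩ (Set.image (fun a : Euc m =>
      L.symm (WithLp.toLp 2 (Fin.snoc a (φ a) : Fin (m + 1) → ℝ) : Euc (m + 1))) A) := by
    rw [← hgraph]; exact ⟨hzV, hz⟩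
  obtain ⟨a₀, ha₀A, ha₀z⟩ := hzVS.2
  -- Lipschitz bound near a₀
  obtain ⟨K, s, hs, hlip⟩ :=
    ((hφ.contDiffAt (hA.mem_nhds ha₀A)).exists_lipschitzOnWith :
      ∃ K, ∃ t ∈ 𝓝 a₀, LipschitzOnWith K φ t)
  obtain ⟨r, hr0, hball⟩ := (Metric.nhds_basis_closedBall.mem_iff).mp hs
  obtain ⟨g, hg, hgeq⟩ := (hlip.mono hball).extend_real
  -- choose ρ
  obtain ⟨ρV, hρV0, hρVsub⟩ := Metric.isOpen_iff.mp hV z hzV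
  set ρ : ℝ := min (ρV / 2) r with hρdef
  have hρ0 : 0 < ρ := lt_min (by linarith) hr0
  have hρr : ρ ≤ r := min_le_right _ _
  have hρV' : Metric.ball z ρ ⊆ V :=
    (Metric.ball_subset_ball (le_trans (min_le_left _ _) (by linarith))).trans hρVsub
  set c : ℝ := 1 + (K : ℝ) with hcdef
  have hc0 : 0 < c := by positivity
  set r' : ℝ := r + ρ with hr'def
  have hr'0 : 0 < r' := by positivity
  -- the comparison set in ℝ × (Fin m → ℝ)
  set B : Set (Fin m → ℝ) := toE ⁻¹' Metric.closedBall a₀ r' with hBdef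
  have hBclosed : IsClosed B := Metric.isClosed_closedBall.preimage continuous_toE
  have hBvol : volume B < ∞ := by
    have hsub : B ⊆ Set.pi Set.univ (fun i => Icc (a₀ i - r') (a₀ i + r')) := by
      intro b hb
      intro i _
      have h1 : |toE b i - a₀ i| ≤ dist (toE b) a₀ := abs_coord_le_dist _ _ i
      have h2 : dist (toE b) a₀ ≤ r' := hb
      have : |b i - a₀ i| ≤ r' := le_trans h1 h2
      rw [abs_le] at this
      constructor <;> [linarith [this.1]; linarith [this.2]]
    calc volume B ≤ volume (Set.pi Set.univ (fun i => Icc (a₀ i - r') (a₀ i + r'))) :=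
          measure_mono hsub
      _ = ∏ i : Fin m, volume (Icc (a₀ i - r') (a₀ i + r')) := volume_pi_pi _
      _ = ∏ _i : Fin m, ENNReal.ofReal (2 * r') := by
          congr 1; funext i; rw [Real.volume_Icc]; ring_nf
      _ < ∞ := by
          rw [Finset.prod_const]
          exact ENNReal.pow_lt_top ENNReal.ofReal_lt_top
  refine ⟨ρ, hρ0, ENNReal.ofReal (2 * c) * volume B, by
    exact ENNReal.mul_ne_top ENNReal.ofReal_ne_top hBvol.ne, ?_⟩
  intro t ht0 htρ
  -- the transported map
  set Φ : Euc (m + 1) → ℝ × (Fin m → ℝ) := fun y =>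
    (MeasurableEquiv.piFinSuccAbove (fun _ : Fin (m + 1) => ℝ) (Fin.last m))
      ((MeasurableEquiv.toLp 2 (Fin (m + 1) → ℝ)).symm (L y)) with hΦdef
  have hΦpres : MeasurePreserving Φ volume volume :=
    ((volume_preserving_piFinSuccAbove (fun _ : Fin (m + 1) => ℝ) (Fin.last m)).comp
      (EuclideanSpace.volume_preserving_symm_measurableEquiv_toLp (Fin (m + 1)))).comp
      L.measurePreserving
  set T : Set (ℝ × (Fin m → ℝ)) :=
    {p | toE p.2 ∈ Metric.closedBall a₀ r' ∧ |p.1 - g (toE p.2)| ≤ c * t} with hTdef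
  have hTclosed : IsClosed T := by
    apply IsClosed.inter
    · exact Metric.isClosed_closedBall.preimage (continuous_toE.comp continuous_snd)
    · exact isClosed_le (continuous_abs.comp
        (continuous_fst.sub (hg.continuous.comp (continuous_toE.comp continuous_snd))))
        continuous_const
  -- the inclusion
  have hincl : Metric.thickening t (S ∩ Metric.ball z ρ) ⊆ Φ ⁻¹' T := by
    intro y hy
    obtain ⟨s', ⟨hs'S, hs'ball⟩, hdisty⟩ := Metric.mem_thickening_iff.mp hy
    have hs'VS : s' ∈ V ∩ (Set.image (fun a : Euc m =>
        L.symm (WithLp.toLp 2 (Fin.snoc a (φ a) : Fin (m + 1) → ℝ) : Euc (m + 1))) A) := by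
      rw [← hgraph]; exact ⟨hρV' hs'ball, hs'S⟩
    obtain ⟨a, haA, haeq⟩ := hs'VS.2
    have hLs' : L s' = (WithLp.toLp 2 (Fin.snoc a (φ a) : Fin (m + 1) → ℝ) : Euc (m + 1)) := by
      rw [← haeq, LinearIsometryEquiv.apply_symm_apply]
    have hLz : L z = (WithLp.toLp 2 (Fin.snoc a₀ (φ a₀) : Fin (m + 1) → ℝ) : Euc (m + 1)) := by
      rw [← ha₀z, LinearIsometryEquiv.apply_symm_apply]
    -- dist a a₀ ≤ dist s' z < ρ ≤ r
    have hdaa₀ : dist a a₀ < ρ := by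
      have h1 := dist_init_le (L s') (L z)
      rw [LinearIsometryEquiv.dist_map] at h1
      rw [hLs', hLz] at h1
      have h2 : toE (Fin.init (WithLp.toLp 2 (Fin.snoc a (φ a) : Fin (m + 1) → ℝ) : Euc (m + 1))) = a := by
        simp [toE]
      have h3 : toE (Fin.init (WithLp.toLp 2 (Fin.snoc a₀ (φ a₀) : Fin (m + 1) → ℝ) : Euc (m + 1))) = a₀ := by
        simp [toE]
      rw [h2, h3] at h1
      calc dist a a₀ ≤ dist s' z := h1
        _ < ρ := hs'ball
    have haball : a ∈ Metric.closedBall a₀ r := Metric.mem_closedBall.mpr (le_of_lt (lt_of_lt_of_le hdaa₀ hρr))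
    have hga : g a = φ a := (hgeq haball).symm
    -- coordinates of u = L y
    set u : Euc (m + 1) := L y with hudef
    have hdu : dist u (L s') = dist y s' := LinearIsometryEquiv.dist_map L y s'
    have hinit : dist (toE (Fin.init u)) a < t := by
      have h1 := dist_init_le u (L s')
      rw [hLs'] at h1
      have h2 : toE (Fin.init (WithLp.toLp 2 (Fin.snoc a (φ a) : Fin (m + 1) → ℝ) : Euc (m + 1))) = a := by
        simp [toE]
      rw [h2] at h1
      rw [hLs'] at hdu
      calc dist (toE (Fin.init u)) a ≤ dist u (WithLp.toLp 2 (Fin.snoc a (φ a) : Fin (m + 1) → ℝ) : Euc (m + 1)) := h1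
        _ = dist y s' := hdu
        _ < t := hdisty
    have hlast : |u (Fin.last m) - φ a| < t := by
      have h1 := dist_last_le u (L s')
      have h2 : (L s') (Fin.last m) = φ a := by
        rw [hLs']
        exact Fin.snoc_last (α := fun _ => ℝ) ..
      rw [h2, hdu] at h1
      exact lt_of_le_of_lt h1 hdisty
    -- conclude membership
    have hΦy : Φ y = (u (Fin.last m), Fin.init u) := by
      have : Φ y = (u (Fin.last m), fun j => u ((Fin.last m).succAbove j)) := rfl
      rw [this]
      congr 1
      funext j
      rw [Fin.succAbove_last]
      rfl
    rw [Set.mem_preimage, hΦy]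
    constructor
    · show toE (Fin.init u) ∈ Metric.closedBall a₀ r'
      have : dist (toE (Fin.init u)) a₀ ≤ dist (toE (Fin.init u)) a + dist a a₀ := dist_triangle _ _ _
      have : dist (toE (Fin.init u)) a₀ ≤ t + ρ := by
        have := dist_triangle (toE (Fin.init u)) a a₀
        linarith [hinit, hdaa₀.le]
      exact Metric.mem_closedBall.mpr (by linarith [htρ, hρr])
    · show |u (Fin.last m) - g (toE (Fin.init u))| ≤ c * t
      have hgdist : |g a - g (toE (Fin.init u))| ≤ (K : ℝ) * t := by
        have := hg.dist_le_mul a (toE (Fin.init u))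
        rw [Real.dist_eq] at this
        calc |g a - g (toE (Fin.init u))| ≤ (K : ℝ) * dist a (toE (Fin.init u)) := this
          _ ≤ (K : ℝ) * t := by
              apply mul_le_mul_of_nonneg_left _ (K.coe_nonneg)
              rw [dist_comm]; exact hinit.le
      have hsplit : u (Fin.last m) - g (toE (Fin.init u))
          = (u (Fin.last m) - φ a) + (g a - g (toE (Fin.init u))) := by rw [hga]; ring
      calc |u (Fin.last m) - g (toE (Fin.init u))|
          = |(u (Fin.last m) - φ a) + (g a - g (toE (Fin.init u)))| := by rw [hsplit]
        _ ≤ |u (Fin.last m) - φ a| + |g a - g (toE (Fin.init u))| := abs_add_le _ _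
        _ ≤ t + (K : ℝ) * t := add_le_add hlast.le hgdist
        _ = c * t := by rw [hcdef]; ring
  -- volume computation
  have hTvol : volume T ≤ ENNReal.ofReal (2 * c * t) * volume B := by
    rw [Measure.volume_eq_prod, Measure.prod_apply_symm hTclosed.measurableSet]
    have hslice : ∀ b : Fin m → ℝ,
        volume ((fun τ => (τ, b)) ⁻¹' T) = B.indicator (fun _ => ENNReal.ofReal (2 * (c * t))) b := by
      intro b
      by_cases hb : b ∈ B
      · have : (fun τ => (τ, b)) ⁻¹' T = Icc (g (toE b) - c * t) (g (toE b) + c * t) := by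
          ext τ
          simp only [Set.mem_preimage, hTdef, Set.mem_setOf_eq, Set.mem_Icc]
          constructor
          · rintro ⟨_, habs⟩; rw [abs_le] at habs; constructor <;> linarith [habs.1, habs.2]
          · rintro ⟨h1, h2⟩; exact ⟨hb, by rw [abs_le]; constructor <;> linarith⟩
        rw [this, Real.volume_Icc, Set.indicator_of_mem hb]
        ring_nf
      · have : (fun τ => (τ, b)) ⁻¹' T = ∅ := by
          ext τ; simp only [Set.mem_preimage, hTdef, Set.mem_setOf_eq, Set.mem_empty_iff_false, iff_false]
          intro h; exact hb h.1
        rw [this, measure_empty, Set.indicator_of_notMem hb]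
    rw [lintegral_congr hslice, lintegral_indicator hBclosed.measurableSet _]
    rw [setLIntegral_const]
    apply le_of_eq
    congr 2
    ring
  calc volume (Metric.thickening t (S ∩ Metric.ball z ρ))
      ≤ volume (Φ ⁻¹' T) := measure_mono hincl
    _ = volume T := hΦpres.measure_preimage hTclosed.measurableSet.nullMeasurableSet
    _ ≤ ENNReal.ofReal (2 * c * t) * volume B := hTvol
    _ = ENNReal.ofReal (2 * c) * volume B * ENNReal.ofReal t := by
        rw [ENNReal.ofReal_mul (by positivity), mul_comm (ENNReal.ofReal (2*c)) _, mul_assoc]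
        ring_nf
    _ ≤ ENNReal.ofReal (2 * c) * volume B * ENNReal.ofReal t := le_rfl

/-- if a point of `s` is within `t` of `sᶜ`, it is within `t` of the frontier. -/
lemma mem_thickening_frontier {E : Type*} [NormedAddCommGroup E] [NormedSpace ℝ E]
    {s : Set E} {x : E} (hx : x ∈ s) {t : ℝ}
    (h : ∃ y ∈ sᶜ, dist x y < t) : x ∈ Metric.thickening t (frontier s) := by
  obtain ⟨y, hy, hxy⟩ := h
  have hseg : IsPreconnected (segment ℝ x y) := (convex_segment x y).isPreconnected
  have hinter : (segment ℝ x y ∩ frontier s).Nonempty := by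
    by_contra hemp
    rw [not_nonempty_iff_eq_empty] at hemp
    have hsub : segment ℝ x y ⊆ interior s ∪ (closure s)ᶜ := by
      intro z hz
      have hzf : z ∉ frontier s := fun hzf => (eq_empty_iff_forall_notMem.mp hemp z) ⟨hz, hzf⟩
      by_cases hzc : z ∈ closure s
      · left
        rcases hzc.out with _
        by_contra hzi
        exact hzf ⟨hzc, hzi⟩
      · right; exact hzc
    rcases hseg.subset_or_subset isOpen_interior (isClosed_closure.isOpen_compl)
        (disjoint_compl_right.mono_left (interior_subset_closure (s := s))) hsub with hsl | hsr
    · exact hy (interior_subset (hsl (right_mem_segment ℝ x y)))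
    · exact (hsr (left_mem_segment ℝ x y)) (subset_closure hx)
  obtain ⟨z, hzseg, hzf⟩ := hinter
  have hdist : dist x z ≤ dist x y := by
    have : segment ℝ x y ⊆ Metric.closedBall x (dist x y) :=
      (convex_closedBall x (dist x y)).segment_subset
        (Metric.mem_closedBall_self dist_nonneg)
        (by simp [Metric.mem_closedBall, dist_comm])
    simpa [Metric.mem_closedBall, dist_comm z x] using this hzseg
  exact Metric.mem_thickening_iff.mpr ⟨z, hzf, lt_of_le_of_lt hdist hxy⟩

lemma global_tube {m : ℕ} {S : Set (Euc (m + 1))} (hcomp : IsCompact S)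
    (hS : IsC1Hypersurface S) :
    ∃ t₀ : ℝ, 0 < t₀ ∧ ∃ C : ℝ≥0∞, C ≠ ∞ ∧ ∀ t : ℝ, 0 < t → t ≤ t₀ →
      volume (Metric.thickening t S) ≤ C * ENNReal.ofReal t := by
  rcases Set.eq_empty_or_nonempty S with hSe | hSne
  · exact ⟨1, one_pos, 0, by simp, fun t ht0 ht1 => by simp [hSe, Metric.thickening_empty]⟩
  choose ρ hρ0 C hC hbd using fun zz : S => local_tube hS zz.2
  have hcover : S ⊆ ⋃ zz : S, Metric.ball (zz : Euc (m+1)) (ρ zz / 2) := fun x hx =>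
    Set.mem_iUnion.mpr ⟨⟨x, hx⟩, by
      simpa [Metric.mem_ball] using half_pos (hρ0 ⟨x, hx⟩)⟩
  obtain ⟨I, hI⟩ := hcomp.elim_finite_subcover
    (fun zz : S => Metric.ball (zz : Euc (m+1)) (ρ zz / 2))
    (fun zz => Metric.isOpen_ball) hcover
  have hIne : I.Nonempty := by
    obtain ⟨x, hx⟩ := hSne
    obtain ⟨i, hiI, _⟩ := Set.mem_iUnion₂.mp (hI hx)
    exact ⟨i, hiI⟩
  set t₀ : ℝ := I.inf' hIne (fun zz => ρ zz / 2) with ht₀def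
  have ht₀0 : 0 < t₀ := (Finset.lt_inf'_iff hIne).mpr fun i _ => half_pos (hρ0 i)
  refine ⟨t₀, ht₀0, ∑ i ∈ I, C i, ?_, ?_⟩
  · exact (ENNReal.sum_lt_top.mpr fun i _ => (hC i).lt_top).ne
  intro t ht0 htt₀
  have hsub : Metric.thickening t S ⊆
      ⋃ i ∈ I, Metric.thickening t (S ∩ Metric.ball (i : Euc (m+1)) (ρ i)) := by
    intro y hy
    obtain ⟨w, hwS, hdw⟩ := Metric.mem_thickening_iff.mp hy
    obtain ⟨i, hiI, hwi⟩ := Set.mem_iUnion₂.mp (hI hwS)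
    refine Set.mem_biUnion hiI (Metric.mem_thickening_iff.mpr ⟨w, ⟨hwS, ?_⟩, hdw⟩)
    exact Metric.ball_subset_ball (by linarith [half_pos (hρ0 i), (half_le_self (hρ0 i).le)]) hwi
  calc volume (Metric.thickening t S)
      ≤ ∑ i ∈ I, volume (Metric.thickening t (S ∩ Metric.ball (i : Euc (m+1)) (ρ i))) :=
        (measure_mono hsub).trans (measure_biUnion_finset_le I _)
    _ ≤ ∑ i ∈ I, C i * ENNReal.ofReal t := Finset.sum_le_sum fun i hi =>
        hbd i t ht0 (le_trans htt₀ (le_trans (Finset.inf'_le _ hi) (half_le_self (hρ0 i).le)))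
    _ = (∑ i ∈ I, C i) * ENNReal.ofReal t := (Finset.sum_mul _ _ _).symm

lemma Qbound {m : ℕ} (𝒳 : Set (Euc (m + 1)))
    (U : Set (Euc (m + 1))) (hUopen : IsOpen U) (hUbdd : Bornology.IsBounded U)
    (hXU : 𝒳 = closure U) (hbound : IsC1Hypersurface (frontier 𝒳))
    (Q : Measure (Euc (m + 1))) [IsProbabilityMeasure Q] (q : Euc (m + 1) → ℝ)
    (hQd : Q = volume.withDensity fun x => ENNReal.ofReal (q x))
    (hqsupp : ∀ x ∉ 𝒳, q x = 0) {qmax : ℝ} (hqub : ∀ x, q x ≤ qmax) :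
    ∃ C : ℝ≥0∞, C ≠ ∞ ∧ ∀ t : ℝ, 0 < t →
      Q {x | Metric.infDist x 𝒳ᶜ < t} ≤ C * ENNReal.ofReal t := by
  have hXclosed : IsClosed 𝒳 := hXU ▸ isClosed_closure
  have hXbdd : Bornology.IsBounded 𝒳 := hXU ▸ hUbdd.closure
  have hXcomp : IsCompact 𝒳 := Metric.isCompact_of_isClosed_isBounded hXclosed hXbdd
  have hXcne : 𝒳ᶜ.Nonempty := by
    by_contra h
    rw [Set.not_nonempty_iff_eq_empty, Set.compl_empty_iff] at h
    exact NormedSpace.unbounded_univ ℝ (Euc (m+1)) (h ▸ hXbdd)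
  have hfcomp : IsCompact (frontier 𝒳) :=
    hXcomp.of_isClosed_subset isClosed_frontier hXclosed.frontier_subset
  obtain ⟨t₀, ht₀0, C, hC, htube⟩ := global_tube hfcomp hbound
  have hvolX : volume 𝒳 < ∞ := hXcomp.measure_lt_top
  set qM : ℝ := max qmax 0 with hqM
  set Ctot : ℝ≥0∞ := ENNReal.ofReal qM * (C + volume 𝒳 / ENNReal.ofReal t₀) with hCtot
  have hCtotne : Ctot ≠ ∞ := by
    apply ENNReal.mul_ne_top ENNReal.ofReal_ne_top
    apply ENNReal.add_ne_top.mpr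
    exact ⟨hC, (ENNReal.div_lt_top hvolX.ne ((ENNReal.ofReal_pos.mpr ht₀0).ne')).ne⟩
  refine ⟨Ctot, hCtotne, ?_⟩
  intro t ht0
  set E : Set (Euc (m+1)) := {x | Metric.infDist x 𝒳ᶜ < t} with hE
  have hEopen : IsOpen E := isOpen_lt (Metric.continuous_infDist_pt _) continuous_const
  have hQE : Q E = ∫⁻ x in E, ENNReal.ofReal (q x) ∂volume := by
    rw [hQd, withDensity_apply _ hEopen.measurableSet]
  have hstep1 : ∫⁻ x in E, ENNReal.ofReal (q x) ∂volume
      ≤ ∫⁻ x in E, 𝒳.indicator (fun _ => ENNReal.ofReal qM) x ∂volume := by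
    apply lintegral_mono
    intro x
    show ENNReal.ofReal (q x) ≤ 𝒳.indicator (fun _ => ENNReal.ofReal qM) x
    by_cases hx : x ∈ 𝒳
    · rw [Set.indicator_of_mem hx]
      exact ENNReal.ofReal_le_ofReal (le_trans (hqub x) (le_max_left _ _))
    · rw [hqsupp x hx, Set.indicator_of_notMem hx]
      simp
  have hstep2 : ∫⁻ x in E, 𝒳.indicator (fun _ => ENNReal.ofReal qM) x ∂volume
      = ENNReal.ofReal qM * volume (𝒳 ∩ E) := by
    rw [setLIntegral_indicator hXclosed.measurableSet, setLIntegral_const, mul_comm]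
  have hinc : 𝒳 ∩ E ⊆ Metric.thickening t (frontier 𝒳) := by
    rintro x ⟨hx𝒳, hxE⟩
    exact mem_thickening_frontier hx𝒳 ((Metric.infDist_lt_iff hXcne).mp hxE)
  have hvol : volume (𝒳 ∩ E) ≤ (C + volume 𝒳 / ENNReal.ofReal t₀) * ENNReal.ofReal t := by
    by_cases hcase : t ≤ t₀
    · calc volume (𝒳 ∩ E) ≤ volume (Metric.thickening t (frontier 𝒳)) := measure_mono hinc
        _ ≤ C * ENNReal.ofReal t := htube t ht0 hcase
        _ ≤ (C + volume 𝒳 / ENNReal.ofReal t₀) * ENNReal.ofReal t := by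
            exact mul_le_mul_left le_self_add _
    · push_neg at hcase
      calc volume (𝒳 ∩ E) ≤ volume 𝒳 := measure_mono Set.inter_subset_left
        _ = volume 𝒳 / ENNReal.ofReal t₀ * ENNReal.ofReal t₀ := by
            rw [ENNReal.div_mul_cancel ((ENNReal.ofReal_pos.mpr ht₀0).ne')
              ENNReal.ofReal_ne_top]
        _ ≤ volume 𝒳 / ENNReal.ofReal t₀ * ENNReal.ofReal t := by
            exact mul_le_mul_right (ENNReal.ofReal_le_ofReal hcase.le) _
        _ ≤ (C + volume 𝒳 / ENNReal.ofReal t₀) * ENNReal.ofReal t := by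
            exact mul_le_mul_left le_add_self _
  calc Q E = ∫⁻ x in E, ENNReal.ofReal (q x) ∂volume := hQE
    _ ≤ ENNReal.ofReal qM * volume (𝒳 ∩ E) := by rw [← hstep2]; exact hstep1
    _ ≤ ENNReal.ofReal qM * ((C + volume 𝒳 / ENNReal.ofReal t₀) * ENNReal.ofReal t) :=
        mul_le_mul_right hvol _
    _ = Ctot * ENNReal.ofReal t := by rw [hCtot, mul_assoc]

lemma final_assembly {m : ℕ} (𝒳 : Set (Euc (m + 1))) (Q : Measure (Euc (m + 1)))
    [IsProbabilityMeasure Q] {C : ℝ≥0∞} (hC : C ≠ ∞)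
    (hQ : ∀ t : ℝ, 0 < t → Q {x | Metric.infDist x 𝒳ᶜ < t} ≤ C * ENNReal.ofReal t) :
    CondA 𝒳 Q := by
  have hd0 : (0:ℝ) < ((m+1:ℕ):ℝ) := by positivity
  -- the series
  set f : ℕ → ℝ := fun k => ((k:ℝ) + 1) * Real.exp (-(k:ℝ)) with hfdef
  have hfnonneg : ∀ k, 0 ≤ f k := fun k => by positivity
  have hexp1 : |Real.exp (-1)| < 1 := by
    rw [abs_of_pos (Real.exp_pos _)]
    exact Real.exp_lt_one_iff.mpr (by norm_num)
  have hfsummable : Summable f := by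
    have h1 : Summable (fun k : ℕ => (k:ℝ) * (Real.exp (-1))^k) := by
      simpa using summable_pow_mul_geometric_of_norm_lt_one 1
        (r := Real.exp (-1)) (by rwa [Real.norm_eq_abs])
    have h2 : Summable (fun k : ℕ => (Real.exp (-1))^k) :=
      summable_geometric_of_lt_one (Real.exp_pos _).le
        (by rwa [abs_of_pos (Real.exp_pos _)] at hexp1)
    apply (h1.add h2).congr
    intro k
    have : Real.exp (-1) ^ k = Real.exp (-(k:ℝ)) := by
      rw [← Real.exp_nat_mul]; ring_nf
    rw [this, hfdef]; ring
  set S₀ : ℝ := ∑' k, f k with hS₀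
  have hS₀0 : 0 ≤ S₀ := tsum_nonneg hfnonneg
  refine ⟨C.toReal * S₀, ?_⟩
  intro L hL
  set δ : Euc (m+1) → ℝ := fun x => Metric.infDist x 𝒳ᶜ with hδdef
  have hδ0 : ∀ x, 0 ≤ δ x := fun x => Metric.infDist_nonneg
  set ε : ℝ := L ^ (-((1:ℝ)/((m+1:ℕ):ℝ))) with hεdef
  have hε0 : 0 < ε := Real.rpow_pos_of_pos hL _
  have hLε : L * ε ^ (m+1) = 1 := by
    have h1 : ε ^ (m+1) = L ^ ((-((1:ℝ)/((m+1:ℕ):ℝ))) * ((m+1:ℕ):ℝ)) := by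
      rw [hεdef, ← Real.rpow_natCast (L ^ (-((1:ℝ)/((m+1:ℕ):ℝ)))) (m+1), ← Real.rpow_mul hL.le]
    have h2 : (-((1:ℝ)/((m+1:ℕ):ℝ))) * ((m+1:ℕ):ℝ) = -1 := by field_simp
    rw [h1, h2, Real.rpow_neg_one, mul_inv_cancel₀ hL.ne']
  set F : Euc (m+1) → ℝ := fun x => Real.exp (-L * δ x ^ (m+1)) with hFdef
  have hFcont : Continuous F :=
    Real.continuous_exp.comp (continuous_const.mul ((Metric.continuous_infDist_pt _).pow (m+1)))
  have hint : ∫ x, F x ∂Q = (∫⁻ x, ENNReal.ofReal (F x) ∂Q).toReal :=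
    integral_eq_lintegral_of_nonneg_ae (Filter.Eventually.of_forall fun x => (Real.exp_pos _).le)
      hFcont.aestronglyMeasurable
  -- the pointwise domination
  set E : ℕ → Set (Euc (m+1)) := fun k => {x | Metric.infDist x 𝒳ᶜ < ((k:ℝ)+1) * ε} with hEdef
  have hEmeas : ∀ k, MeasurableSet (E k) :=
    fun k => (isOpen_lt (Metric.continuous_infDist_pt _) continuous_const).measurableSet
  have key : ∀ x, ENNReal.ofReal (F x) ≤
      ∑' k : ℕ, (E k).indicator (fun _ => ENNReal.ofReal (Real.exp (-(k:ℝ)))) x := by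
    intro x
    set k : ℕ := ⌊δ x / ε⌋₊ with hk
    have hxk : δ x < ((k:ℝ)+1) * ε := by
      have := Nat.lt_floor_add_one (δ x / ε)
      calc δ x = δ x / ε * ε := by field_simp
        _ < ((k:ℝ)+1) * ε := by
            apply mul_lt_mul_of_pos_right _ hε0
            exact this
    have hkε : (k:ℝ) * ε ≤ δ x := by
      have h1 : (k:ℝ) ≤ δ x / ε := Nat.floor_le (div_nonneg (hδ0 x) hε0.le)
      calc (k:ℝ) * ε ≤ δ x / ε * ε := mul_le_mul_of_nonneg_right h1 hε0.le
        _ = δ x := by field_simp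
    have hkd : (k:ℝ) ≤ L * δ x ^ (m+1) := by
      have hkk : (k:ℝ) ≤ (k:ℝ) ^ (m+1) := by
        rcases Nat.eq_zero_or_pos k with h0 | hpos
        · rw [h0]; simp
        · exact_mod_cast Nat.le_self_pow (by omega) k
      have h3 : L * ((k:ℝ) * ε) ^ (m+1) = (k:ℝ)^(m+1) := by
        rw [mul_pow]
        calc L * ((k:ℝ)^(m+1) * ε^(m+1)) = (k:ℝ)^(m+1) * (L * ε^(m+1)) := by ring
          _ = (k:ℝ)^(m+1) := by rw [hLε, mul_one]
      calc (k:ℝ) ≤ (k:ℝ)^(m+1) := hkk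
        _ = L * ((k:ℝ) * ε) ^ (m+1) := h3.symm
        _ ≤ L * δ x ^ (m+1) := by
            apply mul_le_mul_of_nonneg_left _ hL.le
            exact pow_le_pow_left₀ (by positivity) hkε (m+1)
    have hFx : F x ≤ Real.exp (-(k:ℝ)) := Real.exp_le_exp.mpr (by linarith)
    calc ENNReal.ofReal (F x) ≤ ENNReal.ofReal (Real.exp (-(k:ℝ))) := ENNReal.ofReal_le_ofReal hFx
      _ = (E k).indicator (fun _ => ENNReal.ofReal (Real.exp (-(k:ℝ)))) x := by
          rw [Set.indicator_of_mem (show x ∈ E k from hxk)]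
      _ ≤ ∑' j : ℕ, (E j).indicator (fun _ => ENNReal.ofReal (Real.exp (-(j:ℝ)))) x :=
          ENNReal.le_tsum k
  have hlint : ∫⁻ x, ENNReal.ofReal (F x) ∂Q ≤ C * ENNReal.ofReal (S₀ * ε) := by
    calc ∫⁻ x, ENNReal.ofReal (F x) ∂Q
        ≤ ∫⁻ x, ∑' k : ℕ, (E k).indicator (fun _ => ENNReal.ofReal (Real.exp (-(k:ℝ)))) x ∂Q :=
          lintegral_mono key
      _ = ∑' k : ℕ, ∫⁻ x, (E k).indicator (fun _ => ENNReal.ofReal (Real.exp (-(k:ℝ)))) x ∂Q :=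
          lintegral_tsum fun k => (measurable_const.indicator (hEmeas k)).aemeasurable
      _ = ∑' k : ℕ, ENNReal.ofReal (Real.exp (-(k:ℝ))) * Q (E k) := by
          congr 1; funext k
          rw [lintegral_indicator (hEmeas k), setLIntegral_const, mul_comm]
      _ ≤ ∑' k : ℕ, ENNReal.ofReal (Real.exp (-(k:ℝ))) * (C * ENNReal.ofReal (((k:ℝ)+1) * ε)) := by
          apply ENNReal.tsum_le_tsum
          intro k
          exact mul_le_mul_right (hQ (((k:ℝ)+1) * ε) (by positivity)) _
      _ = ∑' k : ℕ, C * ENNReal.ofReal (f k * ε) := by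
          congr 1; funext k
          rw [← mul_assoc, mul_comm (ENNReal.ofReal (Real.exp (-(k:ℝ)))) C, mul_assoc,
            ← ENNReal.ofReal_mul (Real.exp_pos _).le]
          congr 1
          simp only [hfdef]
          ring
      _ = C * ENNReal.ofReal (S₀ * ε) := by
          rw [ENNReal.tsum_mul_left]
          congr 1
          rw [← ENNReal.ofReal_tsum_of_nonneg (fun k => by positivity)
            (hfsummable.mul_right ε), hS₀, tsum_mul_right]
  -- conclude
  have hxint : ∫ x, F x ∂Q ≤ C.toReal * (S₀ * ε) := by
    rw [hint]
    calc (∫⁻ x, ENNReal.ofReal (F x) ∂Q).toReal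
        ≤ (C * ENNReal.ofReal (S₀ * ε)).toReal :=
          ENNReal.toReal_mono (ENNReal.mul_ne_top hC ENNReal.ofReal_ne_top) hlint
      _ = C.toReal * (S₀ * ε) := by
          rw [ENNReal.toReal_mul, ENNReal.toReal_ofReal (by positivity)]
  have hrpow : L ^ ((1:ℝ)/((m+1:ℕ):ℝ)) * ε = 1 := by
    rw [hεdef, ← Real.rpow_add hL]
    norm_num
  have hFeq : (∫ x, Real.exp (-L * Metric.infDist x 𝒳ᶜ ^ (m+1)) ∂Q) = ∫ x, F x ∂Q := rfl
  show L ^ ((1:ℝ)/((m+1:ℕ):ℝ)) * ∫ x, Real.exp (-L * Metric.infDist x 𝒳ᶜ ^ (m+1)) ∂Q ≤ C.toReal * S₀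
  rw [hFeq]
  have hLpos : 0 ≤ L ^ ((1:ℝ)/((m+1:ℕ):ℝ)) := (Real.rpow_pos_of_pos hL _).le
  calc L ^ ((1:ℝ)/((m+1:ℕ):ℝ)) * ∫ x, F x ∂Q
      ≤ L ^ ((1:ℝ)/((m+1:ℕ):ℝ)) * (C.toReal * (S₀ * ε)) := by
        apply mul_le_mul_of_nonneg_left hxint hLpos
    _ = C.toReal * S₀ * (L ^ ((1:ℝ)/((m+1:ℕ):ℝ)) * ε) := by ring
    _ = C.toReal * S₀ := by rw [hrpow, mul_one]

end St13

/-- Theorem 5, smooth-boundary case, Condition (A): if 𝒳 ⊆ ℝ^d is the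
closure of a bounded open set whose boundary is a (d−1)-dimensional C¹ submanifold of ℝ^d and
Q is a probability measure supported in 𝒳 with a bounded Lebesgue density, then (A) holds. -/
theorem statement13 {m : ℕ} (𝒳 : Set (Euc (m + 1)))
    (U : Set (Euc (m + 1))) (hUopen : IsOpen U) (hUbdd : Bornology.IsBounded U)
    (hXU : 𝒳 = closure U)
    (hbound : IsC1Hypersurface (frontier 𝒳))
    (Q : Measure (Euc (m + 1))) [IsProbabilityMeasure Q] (q : Euc (m + 1) → ℝ)
    (hQd : Q = volume.withDensity fun x => ENNReal.ofReal (q x))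
    (hqsupp : ∀ x ∉ 𝒳, q x = 0)
    {qmax : ℝ} (hqub : ∀ x, q x ≤ qmax) :
    CondA 𝒳 Q := by
  obtain ⟨C, hC, hQb⟩ := St13.Qbound 𝒳 U hUopen hUbdd hXU hbound Q q hQd hqsupp hqub
  exact St13.final_assembly 𝒳 Q hC hQb
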